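/- The function $u(c) = \frac{1}{c}\sum_{r=1}^{\infty}\frac{r^{r-2}}{r!}(ce^{-c})^r$ is differentiable at every $c > 0$, with derivative given by termwise differentiation: $u'(c) = \sum_{r=1}^{\infty}\left(\frac{(1-c)}{c^2}\frac{r^{r-1}}{r!}(ce^{-c})^r - \frac{1}{c^2}\frac{r^{r-2}}{r!}(ce^{-c})^r\right)$. -/

import Mathlib

/-!
Termwise differentiation of the series on the open half-line `t > 0`. Writing
`φ t = t e^{-t} ≤ e^{-1}`, the derivative of the `r`-th term is `(1 - t)/t · r^{r-1}/r! · φ(t)^r`,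
and since `|1 - t| e^{-t} ≤ 1` it is bounded by `e · r^{r-1}/r! · e^{-r}`, uniformly in `t > 0`.
Stirling's lower bound `r! ≥ √(2πr) (r/e)^r` turns this into `e · r^{-3/2}`, which is summable.
-/

open Real
open scoped Nat

-- Also at `n = 0`, where both sides vanish because `(0 : ℝ) ^ x = 0` for `x ≠ 0`.
theorem rpow_sub_two_mul_self (n : ℕ) :
    (n : ℝ) ^ ((n : ℝ) - 2) * n = (n : ℝ) ^ ((n : ℝ) - 1) := by
  rcases eq_or_ne n 0 with rfl | hn
  · simp
  rw [show (n : ℝ) - 1 = (n : ℝ) - 2 + 1 by ring, rpow_add_one (by positivity)]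

theorem rpow_sub_two_le_rpow_sub_one (n : ℕ) :
    (n : ℝ) ^ ((n : ℝ) - 2) ≤ (n : ℝ) ^ ((n : ℝ) - 1) := by
  rcases eq_or_ne n 0 with rfl | hn
  · simp
  exact rpow_le_rpow_of_exponent_le (by exact_mod_cast Nat.one_le_iff_ne_zero.2 hn) (by linarith)

theorem rpow_sub_one_div_factorial_mul_exp_neg_one_pow_le (n : ℕ) :
    (n : ℝ) ^ ((n : ℝ) - 1) / n ! * exp (-1) ^ n ≤ ((n : ℝ) ^ (3 / 2 : ℝ))⁻¹ := by
  rcases eq_or_ne n 0 with rfl | hn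
  · simp
  have hn0 : (0 : ℝ) < n := by positivity
  have hpow : (n : ℝ) ^ ((n : ℝ) - 1) * exp (-1) ^ n * (n : ℝ) ^ (3 / 2 : ℝ)
      = √n * (n / exp 1) ^ n := by
    rw [mul_right_comm, ← rpow_add hn0, show (n : ℝ) - 1 + 3 / 2 = n + 1 / 2 by ring,
      rpow_add hn0, rpow_natCast, sqrt_eq_rpow, div_pow, exp_neg, inv_pow]
    ring
  have hstirling : √n * (n / exp 1) ^ n ≤ n ! :=
    (mul_le_mul_of_nonneg_right (sqrt_le_sqrt (by nlinarith [pi_gt_three])) (by positivity)).trans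
      (Stirling.le_factorial_stirling n)
  rw [div_mul_eq_mul_div, ← one_div, div_le_div_iff₀ (by positivity) (by positivity)]
  linarith

theorem hasDerivAt_mul_exp_neg_pow (r : ℕ) {t : ℝ} (ht : t ≠ 0) :
    HasDerivAt (fun t => (t * exp (-t)) ^ r) ((1 - t) / t * r * (t * exp (-t)) ^ r) t := by
  refine (((hasDerivAt_id' t).fun_mul (hasDerivAt_neg t).exp).fun_pow r).congr_deriv ?_
  rcases r with _ | k
  · simp
  simp only [Nat.add_sub_cancel, pow_succ]
  field_simp
  ring

theorem abs_one_sub_div_mul_mul_exp_neg_pow_succ_le {t : ℝ} (ht : 0 < t) (k : ℕ) :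
    |(1 - t) / t| * (t * exp (-t)) ^ (k + 1) ≤ exp (-1) ^ k := by
  have hphi : (t * exp (-t)) ^ k ≤ exp (-1) ^ k :=
    pow_le_pow_left₀ (by positivity) (mul_exp_neg_le_exp_neg_one t) k
  have hfactor : |1 - t| * exp (-t) ≤ 1 := by
    rw [exp_neg, ← div_eq_mul_inv, div_le_one (exp_pos t)]
    have habs : |1 - t| ≤ 1 + t := abs_le.2 ⟨by linarith, by linarith⟩
    linarith [add_one_le_exp t]
  calc |(1 - t) / t| * (t * exp (-t)) ^ (k + 1)
      = |1 - t| * exp (-t) * (t * exp (-t)) ^ k := by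
        rw [abs_div, abs_of_pos ht, pow_succ]; field_simp
    _ ≤ 1 * exp (-1) ^ k := by gcongr
    _ = exp (-1) ^ k := one_mul _

theorem norm_one_sub_div_mul_rpow_sub_one_div_factorial_mul_pow_le {t : ℝ} (ht : 0 < t) (r : ℕ) :
    ‖(1 - t) / t * ((r : ℝ) ^ ((r : ℝ) - 1) / r ! * (t * exp (-t)) ^ r)‖
      ≤ exp 1 * ((r : ℝ) ^ (3 / 2 : ℝ))⁻¹ := by
  rcases r with _ | k
  · simp
  set b : ℝ := ((k + 1 : ℕ) : ℝ) ^ (((k + 1 : ℕ) : ℝ) - 1) / (k + 1)!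
  have hb : 0 ≤ b := by positivity
  calc ‖(1 - t) / t * (b * (t * exp (-t)) ^ (k + 1))‖
      = b * (|(1 - t) / t| * (t * exp (-t)) ^ (k + 1)) := by
        rw [norm_mul, norm_mul, norm_pow, Real.norm_of_nonneg hb, Real.norm_eq_abs,
          Real.norm_of_nonneg (by positivity)]
        ring
    _ ≤ b * exp (-1) ^ k := by gcongr; exact abs_one_sub_div_mul_mul_exp_neg_pow_succ_le ht k
    _ = exp 1 * (b * exp (-1) ^ (k + 1)) := by
        rw [pow_succ, exp_neg]; field_simp
    _ ≤ exp 1 * (((k + 1 : ℕ) : ℝ) ^ (3 / 2 : ℝ))⁻¹ := by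
        gcongr; exact rpow_sub_one_div_factorial_mul_exp_neg_one_pow_le (k + 1)

theorem rpow_sub_two_div_factorial_mul_pow_le {t : ℝ} (ht : 0 ≤ t) (r : ℕ) :
    (r : ℝ) ^ ((r : ℝ) - 2) / r ! * (t * exp (-t)) ^ r ≤ ((r : ℝ) ^ (3 / 2 : ℝ))⁻¹ :=
  calc (r : ℝ) ^ ((r : ℝ) - 2) / r ! * (t * exp (-t)) ^ r
      ≤ (r : ℝ) ^ ((r : ℝ) - 1) / r ! * exp (-1) ^ r := by
        gcongr ?_ / _ * ?_ ^ _
        · exact rpow_sub_two_le_rpow_sub_one r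
        · exact mul_exp_neg_le_exp_neg_one t
    _ ≤ ((r : ℝ) ^ (3 / 2 : ℝ))⁻¹ := rpow_sub_one_div_factorial_mul_exp_neg_one_pow_le r

theorem summable_rpow_three_halves_inv : Summable fun r : ℕ => ((r : ℝ) ^ (3 / 2 : ℝ))⁻¹ :=
  summable_nat_rpow_inv.2 (by norm_num)

theorem summable_rpow_sub_two_div_factorial_mul_pow {t : ℝ} (ht : 0 ≤ t) :
    Summable fun r : ℕ => (r : ℝ) ^ ((r : ℝ) - 2) / r ! * (t * exp (-t)) ^ r :=
  summable_rpow_three_halves_inv.of_nonneg_of_le (fun r => by positivity)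
    (rpow_sub_two_div_factorial_mul_pow_le ht)

theorem summable_one_sub_div_mul_rpow_sub_one_div_factorial_mul_pow {t : ℝ} (ht : 0 < t) :
    Summable fun r : ℕ => (1 - t) / t * ((r : ℝ) ^ ((r : ℝ) - 1) / r ! * (t * exp (-t)) ^ r) :=
  (summable_rpow_three_halves_inv.mul_left (exp 1)).of_norm_bounded
    (norm_one_sub_div_mul_rpow_sub_one_div_factorial_mul_pow_le ht)

theorem hasDerivAt_rpow_sub_two_div_factorial_mul_pow (r : ℕ) {t : ℝ} (ht : t ≠ 0) :
    HasDerivAt (fun t => (r : ℝ) ^ ((r : ℝ) - 2) / r ! * (t * exp (-t)) ^ r)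
      ((1 - t) / t * ((r : ℝ) ^ ((r : ℝ) - 1) / r ! * (t * exp (-t)) ^ r)) t := by
  refine ((hasDerivAt_mul_exp_neg_pow r ht).const_mul _).congr_deriv ?_
  rw [← rpow_sub_two_mul_self]
  ring

theorem hasDerivAt_tsum_rpow_sub_two_div_factorial_mul_pow {c : ℝ} (hc : 0 < c) :
    HasDerivAt (fun t => ∑' r : ℕ, (r : ℝ) ^ ((r : ℝ) - 2) / r ! * (t * exp (-t)) ^ r)
      (∑' r : ℕ, (1 - c) / c * ((r : ℝ) ^ ((r : ℝ) - 1) / r ! * (c * exp (-c)) ^ r)) c :=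
  hasDerivAt_tsum_of_isPreconnected (summable_rpow_three_halves_inv.mul_left (exp 1))
    isOpen_Ioi isPreconnected_Ioi
    (fun r _ ht => hasDerivAt_rpow_sub_two_div_factorial_mul_pow r (ne_of_gt ht))
    (fun r _ ht => norm_one_sub_div_mul_rpow_sub_one_div_factorial_mul_pow_le ht r)
    hc (summable_rpow_sub_two_div_factorial_mul_pow hc.le) hc

/-- The function `u c = (1/c) ∑_{r≥1} (r^(r-2)/r!) (c e^{-c})^r` is differentiable at every
`c > 0` with derivative given by termwise differentiation. -/
theorem u_hasDerivAt (c : ℝ) (hc : 0 < c) :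
    HasDerivAt
      (fun t : ℝ => (1 / t) * ∑' r : ℕ,
        (r : ℝ) ^ ((r : ℝ) - 2) / (Nat.factorial r) * (t * Real.exp (-t)) ^ r)
      (∑' r : ℕ,
        ((1 - c) / c ^ 2 * ((r : ℝ) ^ ((r : ℝ) - 1) / (Nat.factorial r))
            * (c * Real.exp (-c)) ^ r
         - 1 / c ^ 2 * ((r : ℝ) ^ ((r : ℝ) - 2) / (Nat.factorial r))
            * (c * Real.exp (-c)) ^ r))
      c := by
  have hprod :=
    (hasDerivAt_inv hc.ne').fun_mul (hasDerivAt_tsum_rpow_sub_two_div_factorial_mul_pow hc)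
  simp only [← one_div] at hprod
  refine hprod.congr_deriv ?_
  have hterm (r : ℕ) :
      (1 - c) / c ^ 2 * ((r : ℝ) ^ ((r : ℝ) - 1) / r !) * (c * exp (-c)) ^ r
        - 1 / c ^ 2 * ((r : ℝ) ^ ((r : ℝ) - 2) / r !) * (c * exp (-c)) ^ r
      = 1 / c * ((1 - c) / c * ((r : ℝ) ^ ((r : ℝ) - 1) / r ! * (c * exp (-c)) ^ r))
        - 1 / c ^ 2 * ((r : ℝ) ^ ((r : ℝ) - 2) / r ! * (c * exp (-c)) ^ r) := by
    field_simp
  rw [tsum_congr hterm,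
    ((summable_one_sub_div_mul_rpow_sub_one_div_factorial_mul_pow hc).mul_left _).tsum_sub
      ((summable_rpow_sub_two_div_factorial_mul_pow hc.le).mul_left _),
    tsum_mul_left (a := 1 / c), tsum_mul_left (a := 1 / c ^ 2)]
  ring
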